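/- arXiv:2501.01602 — 2 statements merged into one kernel-verified Lean document; each statement's English description precedes it below -/
import Mathlib

section
/- Let 2 ≤ k₁, k₂, 0 < r < 1 with 1 < kᵢr < 2 for i = 1,2 and k₁ + k₂ − k₁k₂r > 0. Then the four numbers (k₁r−1)(2−k₂r)/(r(k₁−k₂(k₁r−1))), (2−k₁r)/(r(k₁−k₂(k₁r−1))), (k₂r−1)(2−k₁r)/(r(k₂−k₁(k₂r−1))), (2−k₂r)/(r(k₂−k₁(k₂r−1))) all lie in (0,1). -/
/-- the four combined exponents of (A1) lie in `(0,1)`. -/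
theorem stmt_4 (k₁ k₂ r : ℝ) (hk₁ : 2 ≤ k₁) (hk₂ : 2 ≤ k₂)
    (hr0 : 0 < r) (hr1 : r < 1)
    (h₁ : 1 < k₁ * r) (h₁' : k₁ * r < 2)
    (h₂ : 1 < k₂ * r) (h₂' : k₂ * r < 2)
    (hsum : 0 < k₁ + k₂ - k₁ * k₂ * r) :
    (k₁ * r - 1) * (2 - k₂ * r) / (r * (k₁ - k₂ * (k₁ * r - 1))) ∈ Set.Ioo (0:ℝ) 1 ∧
    (2 - k₁ * r) / (r * (k₁ - k₂ * (k₁ * r - 1))) ∈ Set.Ioo (0:ℝ) 1 ∧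
    (k₂ * r - 1) * (2 - k₁ * r) / (r * (k₂ - k₁ * (k₂ * r - 1))) ∈ Set.Ioo (0:ℝ) 1 ∧
    (2 - k₂ * r) / (r * (k₂ - k₁ * (k₂ * r - 1))) ∈ Set.Ioo (0:ℝ) 1 := by
  have hd1 : 0 < r * (k₁ - k₂ * (k₁ * r - 1)) := by nlinarith
  have hd2 : 0 < r * (k₂ - k₁ * (k₂ * r - 1)) := by nlinarith
  refine ⟨⟨div_pos (by nlinarith) hd1, (div_lt_one hd1).2 (by nlinarith)⟩,
    ⟨div_pos (by nlinarith) hd1, (div_lt_one hd1).2 (by nlinarith [mul_pos (sub_pos.2 h₁) (sub_pos.2 h₂')])⟩,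
    ⟨div_pos (by nlinarith) hd2, (div_lt_one hd2).2 (by nlinarith)⟩,
    ⟨div_pos (by nlinarith) hd2, (div_lt_one hd2).2 (by nlinarith [mul_pos (sub_pos.2 h₂) (sub_pos.2 h₁')])⟩⟩
end

section
/- Let ℏ : [0,∞) → ℝ be differentiable and l > 0 satisfy ℏ(t) ≥ ℏ(s) + ℏ'(s)(t−s) + l(t−s)² for all t,s ≥ 0, where ℏ(s) = Φ(s²) and Φ' = φ with φ(s) ≥ ρ₀ > 0 for all s. Then for any vectors e₁, e₂ in a real inner product space, Φ(|e₁|²/2) − Φ(|e₂|²/2) − φ(|e₂|²/2)·(e₂·(e₁−e₂)) ≥ (min{l, ρ₀}/2)·|e₁ − e₂|². -/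
/-- the strong-convexity estimate of (Υ₂) transferred to vectors
of a real inner product space (key estimate in the Palais–Smale argument). -/
theorem stmt_7 {E : Type*} [NormedAddCommGroup E] [InnerProductSpace ℝ E]
    (φ Φ : ℝ → ℝ) (ρ₀ l : ℝ) (hρ₀ : 0 < ρ₀) (hl : 0 < l)
    (hφ : ∀ s, 0 ≤ s → ρ₀ ≤ φ s)
    (hΦ : ∀ s, HasDerivAt Φ (φ s) s)
    (hconv : ∀ t s : ℝ, 0 ≤ t → 0 ≤ s →
      Φ (t ^ 2) ≥ Φ (s ^ 2) + 2 * s * φ (s ^ 2) * (t - s) + l * (t - s) ^ 2)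
    (e₁ e₂ : E) :
    Φ (‖e₁‖ ^ 2 / 2) - Φ (‖e₂‖ ^ 2 / 2)
        - φ (‖e₂‖ ^ 2 / 2) * (inner ℝ e₂ (e₁ - e₂) : ℝ)
      ≥ (min l ρ₀) / 2 * ‖e₁ - e₂‖ ^ 2 := by
  have h2 : (0:ℝ) < Real.sqrt 2 := Real.sqrt_pos.mpr (by norm_num)
  set t := ‖e₁‖ / Real.sqrt 2 with ht
  set s := ‖e₂‖ / Real.sqrt 2 with hs
  have hsq : Real.sqrt 2 ^ 2 = 2 := Real.sq_sqrt (by norm_num)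
  have ht2 : t ^ 2 = ‖e₁‖ ^ 2 / 2 := by
    rw [ht, div_pow, hsq]
  have hs2 : s ^ 2 = ‖e₂‖ ^ 2 / 2 := by
    rw [hs, div_pow, hsq]
  have hc := hconv t s (div_nonneg (norm_nonneg _) h2.le)
    (div_nonneg (norm_nonneg _) h2.le)
  rw [ht2, hs2] at hc
  have hinner : (inner ℝ e₂ (e₁ - e₂) : ℝ) = inner ℝ e₂ e₁ - ‖e₂‖ ^ 2 := by
    rw [inner_sub_right, real_inner_self_eq_norm_sq]
  have hnormsub : ‖e₁ - e₂‖ ^ 2 = ‖e₁‖ ^ 2 - 2 * inner ℝ e₁ e₂ + ‖e₂‖ ^ 2 :=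
    norm_sub_sq_real e₁ e₂
  have hD : (inner ℝ e₂ e₁ : ℝ) ≤ ‖e₂‖ * ‖e₁‖ := real_inner_le_norm e₂ e₁
  have hcomm : (inner ℝ e₁ e₂ : ℝ) = inner ℝ e₂ e₁ := real_inner_comm e₂ e₁
  have hφ2 : ρ₀ ≤ φ (‖e₂‖ ^ 2 / 2) := hφ _ (by positivity)
  have hml : min l ρ₀ ≤ l := min_le_left _ _
  have hmr : min l ρ₀ ≤ ρ₀ := min_le_right _ _
  have hts : 2 * s * φ (‖e₂‖ ^ 2 / 2) * (t - s)
      = φ (‖e₂‖ ^ 2 / 2) * (‖e₂‖ * ‖e₁‖ - ‖e₂‖ ^ 2) := by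
    rw [ht, hs]; field_simp; rw [hsq]; ring
  have hts2 : (t - s) ^ 2 = (‖e₁‖ - ‖e₂‖) ^ 2 / 2 := by
    rw [ht, hs, div_sub_div_same, div_pow, hsq]
  rw [hts, hts2] at hc
  rw [hinner, hnormsub, hcomm]
  nlinarith [hc, mul_le_mul_of_nonneg_right hmr (sub_nonneg.mpr hD),
    mul_le_mul_of_nonneg_right hφ2 (sub_nonneg.mpr hD),
    mul_le_mul_of_nonneg_right hml (sq_nonneg (‖e₁‖ - ‖e₂‖))]
end
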